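/- arXiv:1808.03925 — 8 statements merged into one kernel-verified Lean document; each statement's English description precedes it below -/
import Mathlib

section
/- There do not exist real numbers α, β, γ, δ such that α + β + γ + δ = -1, αβ + αγ + αδ + βγ + βδ + γδ = 0, and α < 0 < β < γ < δ. -/
theorem stmt_0 :
    ¬ ∃ α β γ δ : ℝ,
      α + β + γ + δ = -1 ∧
      α*β + α*γ + α*δ + β*γ + β*δ + γ*δ = 0 ∧
      α < 0 ∧ 0 < β ∧ β < γ ∧ γ < δ := by
  rintro ⟨a, b, c, d, h1, h2, ha, hb, hbc, hcd⟩
  nlinarith [sq_nonneg (b-c), sq_nonneg (b-d), sq_nonneg (c-d), sq_nonneg (b+c+d), mul_pos hb (lt_trans hb hbc), mul_pos (lt_trans hb hbc) (lt_trans (lt_trans hb hbc) hcd)]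
end

section
/- Let H be a real polynomial and k ≥ 0 an integer. Suppose g : (0, +∞) → ℝ is a differentiable function with g(s) > 0 and g'(s) > 0 for all s > 0, satisfying g(s)^k · g'(s) / H(g(s)) = 1/s for all s > 0 (in particular H(g(s)) ≠ 0). Let A = lim_{s→0⁺} g(s). Then H(x) > 0 for all x in the open interval (A, B) where B = lim_{s→+∞} g(s) ∈ (0, +∞], and H(A) = 0. -/
/-!
Since g > 0 and g' > 0, the equation forces H(g s) = s g(s)^k g'(s) > 0, and g maps (0, ∞) onto
(A, B) by the intermediate value theorem, so H > 0 there. Passing to the limit gives H(A) ≥ 0.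
If H(A) > 0, then s (g^{k+1})'(s) = (k+1) H(g s) stays above a positive constant c near 0, so
g^{k+1} - c log is increasing there and g^{k+1} would tend to -∞ at 0⁺, contradicting g(s) → A.
-/

open Filter Set Topology

lemma exists_eq_of_tendsto_nhdsGT_zero_of_tendsto_atTop {g : ℝ → ℝ}
    (hg : ContinuousOn g (Ioi 0)) {A : ℝ} (hA : Tendsto g (𝓝[>] 0) (𝓝 A))
    {B : EReal} (hB : Tendsto (fun s => (g s : EReal)) atTop (𝓝 B))
    {x : ℝ} (hAx : A < x) (hxB : (x : EReal) < B) : ∃ s, 0 < s ∧ g s = x := by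
  obtain ⟨t₁, hgt₁, ht₁⟩ :=
    ((hA.eventually (eventually_lt_nhds hAx)).and self_mem_nhdsWithin).exists
  obtain ⟨t₂, hgt₂, ht₁₂⟩ :=
    ((hB.eventually (eventually_gt_nhds hxB)).and (eventually_ge_atTop t₁)).exists
  obtain ⟨s, hs, rfl⟩ : x ∈ g '' Icc t₁ t₂ :=
    intermediate_value_Icc ht₁₂ (hg.mono fun y hy => lt_of_lt_of_le ht₁ hy.1)
      ⟨hgt₁.le, EReal.coe_lt_coe_iff.mp hgt₂ |>.le⟩
  exact ⟨s, lt_of_lt_of_le ht₁ hs.1, rfl⟩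

lemma tendsto_atBot_of_mul_deriv_ge {F F' : ℝ → ℝ} {c : ℝ} (hc : 0 < c)
    (hF : ∀ᶠ s in 𝓝[>] 0, HasDerivAt F (F' s) s)
    (hF' : ∀ᶠ s in 𝓝[>] 0, c ≤ s * F' s) :
    Tendsto F (𝓝[>] 0) atBot := by
  obtain ⟨δ, hδ, hδF⟩ := (nhdsGT_basis (0 : ℝ)).eventually_iff.mp (hF.and hF')
  have hφ : ∀ s ∈ Ioo 0 δ,
      HasDerivAt (fun s => F s - c * Real.log s) (F' s - c * s⁻¹) s := fun s hs =>
    (hδF hs).1.sub ((Real.hasDerivAt_log hs.1.ne').const_mul c)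
  have hmono : MonotoneOn (fun s => F s - c * Real.log s) (Ioo 0 δ) := by
    refine monotoneOn_of_hasDerivWithinAt_nonneg (convex_Ioo 0 δ)
      (f' := fun s => F' s - c * s⁻¹) (fun s hs => (hφ s hs).continuousAt.continuousWithinAt) ?_ ?_
      <;> rw [interior_Ioo]
    · exact fun s hs => (hφ s hs).hasDerivWithinAt
    · intro s hs
      rw [sub_nonneg, ← div_eq_mul_inv, div_le_iff₀' hs.1]
      exact (hδF hs).2
  set t := δ / 2
  have ht : t ∈ Ioo 0 δ := ⟨by positivity, half_lt_self hδ⟩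
  have hbound : ∀ᶠ s in 𝓝[>] 0, F s ≤ (F t - c * Real.log t) + c * Real.log s := by
    filter_upwards [Ioo_mem_nhdsGT ht.1] with s hs
    have := hmono ⟨hs.1, hs.2.trans ht.2⟩ ht hs.2.le
    dsimp only at this
    linarith
  exact tendsto_atBot_mono' _ hbound <| tendsto_atBot_add_const_left _ _ <|
    Real.tendsto_log_nhdsGT_zero.const_mul_atBot hc

theorem stmt_5 (H : Polynomial ℝ) (k : ℕ) (g : ℝ → ℝ)
    (hdiff : ∀ s, 0 < s → DifferentiableAt ℝ g s)
    (hpos : ∀ s, 0 < s → 0 < g s)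
    (hderiv : ∀ s, 0 < s → 0 < deriv g s)
    (hH : ∀ s, 0 < s → H.eval (g s) ≠ 0)
    (hode : ∀ s, 0 < s → (g s)^k * deriv g s / H.eval (g s) = 1 / s)
    (A : ℝ) (hA : Filter.Tendsto g (nhdsWithin 0 (Set.Ioi 0)) (nhds A))
    (B : EReal)
    (hB : Filter.Tendsto (fun s => (g s : EReal)) Filter.atTop (nhds B)) :
    (∀ x : ℝ, A < x → (x : EReal) < B → 0 < H.eval x) ∧ H.eval A = 0 := by
  have hflow : ∀ s, 0 < s → H.eval (g s) = s * (g s ^ k * deriv g s) := fun s hs => by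
    have := hode s hs
    field_simp [hH s hs, hs.ne'] at this
    linarith
  have hHpos : ∀ s, 0 < s → 0 < H.eval (g s) := fun s hs => by
    rw [hflow s hs]
    have := hpos s hs
    have := hderiv s hs
    positivity
  have hlim : Tendsto (fun s => H.eval (g s)) (𝓝[>] 0) (𝓝 (H.eval A)) :=
    (H.continuous.tendsto A).comp hA
  refine ⟨fun x hAx hxB => ?_, ?_⟩
  · obtain ⟨s, hs, rfl⟩ := exists_eq_of_tendsto_nhdsGT_zero_of_tendsto_atTop
      (fun s hs => (hdiff s hs).continuousAt.continuousWithinAt) hA hB hAx hxB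
    exact hHpos s hs
  refine le_antisymm (not_lt.mp fun hApos => ?_)
    (ge_of_tendsto hlim (eventually_nhdsWithin_of_forall fun s hs => (hHpos s hs).le))
  have hc : 0 < (k + 1) * H.eval A / 2 := by positivity
  refine not_tendsto_atBot_of_tendsto_nhds (hA.pow (k + 1)) (tendsto_atBot_of_mul_deriv_ge hc
    (F' := fun s => (k + 1) * (g s ^ k * deriv g s)) ?_ ?_)
  · filter_upwards [self_mem_nhdsWithin] with s hs
    simpa [Pi.pow_def, mul_assoc] using (hdiff s hs).hasDerivAt.pow (k + 1)
  · filter_upwards [self_mem_nhdsWithin, hlim.eventually (eventually_gt_nhds (half_lt_self hApos))]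
      with s hs hHs
    rw [mul_left_comm, ← hflow s hs]
    nlinarith
end

section
/- Let H be a real polynomial and k ≥ 0 an integer. Suppose g : (0, +∞) → ℝ is a differentiable function with g(s) > 0 and g'(s) > 0 for all s > 0, satisfying g(s)^k · g'(s) / H(g(s)) = 1/s for all s > 0. If lim_{s→+∞} g(s) = +∞, then the degree of H is at most k + 1. -/
open Filter Polynomial Asymptotics Set

theorem stmt_6 (H : Polynomial ℝ) (k : ℕ) (g : ℝ → ℝ)
    (hdiff : ∀ s, 0 < s → DifferentiableAt ℝ g s)
    (hpos : ∀ s, 0 < s → 0 < g s)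
    (hderiv : ∀ s, 0 < s → 0 < deriv g s)
    (hH : ∀ s, 0 < s → H.eval (g s) ≠ 0)
    (hode : ∀ s, 0 < s → (g s)^k * deriv g s / H.eval (g s) = 1 / s)
    (htop : Filter.Tendsto g Filter.atTop Filter.atTop) :
    H.natDegree ≤ k + 1 := by
  by_contra hlt
  push_neg at hlt
  set m := H.natDegree with hm
  set c := H.leadingCoeff with hc
  have hH0 : H ≠ 0 := fun h => hH 1 one_pos (by simp [h])
  have hc0 : c ≠ 0 := Polynomial.leadingCoeff_ne_zero.2 hH0
  have hdegpos : 0 < H.degree := Polynomial.natDegree_pos_iff_degree_pos.1 (by omega)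
  -- positivity of H along g
  have hHg : ∀ s, 0 < s → 0 < H.eval (g s) := by
    intro s hs
    have h1 := hode s hs
    have hnum : 0 < (g s)^k * deriv g s := by
      have := hpos s hs; have := hderiv s hs; positivity
    rcases lt_or_gt_of_ne (hH s hs) with hneg | hpos'
    · exfalso
      have : (g s)^k * deriv g s / H.eval (g s) < 0 := div_neg_of_pos_of_neg hnum hneg
      rw [h1] at this
      have : (0:ℝ) < 1/s := by positivity
      linarith
    · exact hpos'
  -- leading coefficient is positive
  have hcpos : 0 < c := by
    rcases lt_or_gt_of_ne hc0 with hneg | hposc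
    · exfalso
      have hbot : Tendsto (fun x => H.eval x) atTop atBot :=
        Polynomial.tendsto_atBot_of_leadingCoeff_nonpos H hdegpos hneg.le
      have : ∀ᶠ s in atTop, H.eval (g s) < 0 :=
        htop.eventually (hbot.eventually (eventually_lt_atBot 0))
      obtain ⟨s, hs1, hs2⟩ := (this.and (eventually_gt_atTop 0)).exists
      exact absurd (hHg s hs2) (not_lt.2 hs1.le)
    · exact hposc
  -- lower bound on H eventually
  have hequiv := H.isEquivalent_atTop_lead
  have hlow : ∀ᶠ x in atTop, c/2 * x^m ≤ H.eval x := by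
    have h2 := (Asymptotics.isLittleO_iff.1 hequiv) (by norm_num : (0:ℝ) < 1/2)
    filter_upwards [h2, eventually_ge_atTop (0:ℝ)] with x hx hx0
    simp only [Pi.sub_apply, Real.norm_eq_abs] at hx
    have hcx : 0 ≤ c * x^m := by positivity
    rw [abs_of_nonneg hcx] at hx
    have := abs_le.1 hx
    nlinarith [this.1]
  -- transfer along g, find s0
  have hev : ∀ᶠ s in atTop, (0:ℝ) < s ∧ c/2 * (g s)^m ≤ H.eval (g s) :=
    (eventually_gt_atTop 0).and (htop.eventually hlow)
  obtain ⟨s0, hs0⟩ := eventually_atTop.1 hev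
  have hs0pos : 0 < s0 := (hs0 s0 le_rfl).1
  -- setup exponents
  set p : ℕ := m - (k + 2) with hp
  set n : ℕ := p + 1 with hn
  have hmn : m = k + 1 + n := by omega
  set C : ℝ := 2 / (c * n) with hC
  have hCpos : 0 < C := by
    have : (0:ℝ) < n := by positivity
    positivity
  set φ : ℝ → ℝ := fun s => Real.log s + C / (g s)^n with hφ
  -- key inequality
  have key : ∀ x, s0 ≤ x → 1/x ≤ (2/c) * deriv g x / (g x)^(n+1) := by
    intro x hx
    obtain ⟨hx0, hxlow⟩ := hs0 x hx
    have hgx := hpos x hx0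
    have hdx := hderiv x hx0
    have hHx := hHg x hx0
    have hhalf : (0:ℝ) < c/2 * (g x)^m := by positivity
    have h1 : 1/x = (g x)^k * deriv g x / H.eval (g x) := (hode x hx0).symm
    have h2 : (g x)^k * deriv g x / H.eval (g x) ≤ (g x)^k * deriv g x / (c/2 * (g x)^m) := by
      apply div_le_div_of_nonneg_left (by positivity) hhalf hxlow
    have h3 : (g x)^k * deriv g x / (c/2 * (g x)^m) = (2/c) * deriv g x / (g x)^(n+1) := by
      rw [hmn]
      have hgne : g x ≠ 0 := ne_of_gt hgx
      field_simp
      ring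
    rw [h1]; rw [h3] at h2; exact h2
  -- derivative of φ
  have hder : ∀ x, s0 ≤ x → HasDerivAt φ
      (1/x + (0 * (g x)^n - C * (↑n * (g x)^(n-1) * deriv g x)) / ((g x)^n)^2) x := by
    intro x hx
    have hx0 : 0 < x := lt_of_lt_of_le hs0pos hx
    have hgx := hpos x hx0
    have hd1 : HasDerivAt (fun s => Real.log s) (1/x) x := by
      simpa [one_div] using Real.hasDerivAt_log (ne_of_gt hx0)
    have hd2 : HasDerivAt (fun s => (g s)^n) (↑n * (g x)^(n-1) * deriv g x) x :=
      ((hdiff x hx0).hasDerivAt).pow n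
    have hd3 : HasDerivAt (fun s => C / (g s)^n)
        ((0 * (g x)^n - C * (↑n * (g x)^(n-1) * deriv g x)) / ((g x)^n)^2) x :=
      (hasDerivAt_const x C).div hd2 (by positivity)
    exact hd1.add hd3
  -- deriv nonpos
  have hnonpos : ∀ x ∈ interior (Ici s0), deriv φ x ≤ 0 := by
    intro x hx
    rw [interior_Ici] at hx
    have hx' : s0 ≤ x := le_of_lt hx
    rw [(hder x hx').deriv]
    have hx0 : 0 < x := lt_of_lt_of_le hs0pos hx'
    have hgx := hpos x hx0
    have hk := key x hx'
    have heq : (0 * (g x)^n - C * (↑n * (g x)^(n-1) * deriv g x)) / ((g x)^n)^2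
        = -((2/c) * deriv g x / (g x)^(n+1)) := by
      have hgne : g x ≠ 0 := ne_of_gt hgx
      have hnn : n - 1 = p := by omega
      have hnc : (n:ℝ) ≠ 0 := by positivity
      rw [hnn, hC]
      have h2n : (g x)^n * (g x)^n = (g x)^p * (g x)^(n+1) := by
        rw [← pow_add, ← pow_add]; congr 1; omega
      have h2n' : ((g x) ^ n)^2 = g x ^ p * g x ^ (n+1) := by rw [sq]; exact h2n
      rw [div_eq_iff (by positivity), neg_mul_comm]
      field_simp
      linear_combination 2 * deriv g x * c * (n:ℝ) * h2n'
    rw [heq]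
    linarith
  -- φ antitone on Ici s0
  have hcont : ContinuousOn φ (Ici s0) := fun x hx => (hder x hx).continuousAt.continuousWithinAt
  have hdiffOn : DifferentiableOn ℝ φ (interior (Ici s0)) := by
    intro x hx
    rw [interior_Ici] at hx
    exact ((hder x hx.le).differentiableAt).differentiableWithinAt
  have hanti : AntitoneOn φ (Ici s0) :=
    antitoneOn_of_deriv_nonpos (convex_Ici s0) hcont hdiffOn hnonpos
  -- contradiction: log unbounded
  set s1 : ℝ := max s0 (Real.exp (φ s0)) + 1 with hs1
  have hs1gt : s0 < s1 := by
    have := le_max_left s0 (Real.exp (φ s0)); linarith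
  have hb : φ s1 ≤ φ s0 := hanti self_mem_Ici (le_of_lt hs1gt) hs1gt.le
  have hg1 : 0 < g s1 := hpos s1 (lt_trans hs0pos hs1gt)
  have hlog : Real.log s1 < φ s1 := by
    have : 0 < C / (g s1)^n := by positivity
    simp only [hφ]; linarith
  have hexp : Real.exp (φ s0) < s1 := by
    have := le_max_right s0 (Real.exp (φ s0)); linarith
  have : φ s0 < Real.log s1 := by
    calc φ s0 = Real.log (Real.exp (φ s0)) := (Real.log_exp _).symm
      _ < Real.log s1 := Real.log_lt_log (Real.exp_pos _) hexp
  linarith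
end

section
/- Let H be a real polynomial and k ≥ 0 an integer. Suppose g : (0, +∞) → ℝ is a differentiable function with g(s) > 0 and g'(s) > 0 for all s > 0, satisfying s · g(s)^k · g'(s) = H(g(s)) for all s > 0 with H(g(s)) > 0. If B = lim_{s→+∞} g(s) is finite, then H(B) = 0. -/
theorem stmt_7 (H : Polynomial ℝ) (k : ℕ) (g : ℝ → ℝ)
    (hdiff : ∀ s, 0 < s → DifferentiableAt ℝ g s)
    (hpos : ∀ s, 0 < s → 0 < g s)
    (hderiv : ∀ s, 0 < s → 0 < deriv g s)
    (hode : ∀ s, 0 < s → s * (g s)^k * deriv g s = H.eval (g s))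
    (hH : ∀ s, 0 < s → 0 < H.eval (g s))
    (B : ℝ) (hB : Filter.Tendsto g Filter.atTop (nhds B)) :
    H.eval B = 0 := by
  -- g is monotone on (0,∞)
  have hmono : ∀ s t : ℝ, 0 < s → s ≤ t → g s ≤ g t := by
    intro s t hs hst
    have hm : MonotoneOn g (Set.Ici s) := by
      apply monotoneOn_of_deriv_nonneg (convex_Ici s)
      · exact fun x hx => (hdiff x (lt_of_lt_of_le hs hx)).continuousAt.continuousWithinAt
      · intro x hx
        rw [interior_Ici] at hx
        exact (hdiff x (hs.trans hx)).differentiableWithinAt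
      · intro x hx
        rw [interior_Ici] at hx
        exact (hderiv x (hs.trans hx)).le
    exact hm Set.self_mem_Ici hst hst
  have hle : ∀ s : ℝ, 0 < s → g s ≤ B := by
    intro s hs
    apply ge_of_tendsto hB
    filter_upwards [Filter.eventually_ge_atTop s] with t ht
    exact hmono s t hs ht
  have hBpos : 0 < B := lt_of_lt_of_le (hpos 1 one_pos) (hle 1 one_pos)
  have hHg : Filter.Tendsto (fun s => H.eval (g s)) Filter.atTop (nhds (H.eval B)) :=
    (H.continuous.tendsto B).comp hB
  have hHB0 : 0 ≤ H.eval B := by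
    apply ge_of_tendsto hHg
    filter_upwards [Filter.eventually_gt_atTop (0:ℝ)] with s hs
    exact (hH s hs).le
  by_contra hne
  have hc : 0 < H.eval B := lt_of_le_of_ne hHB0 (Ne.symm hne)
  set c := H.eval B with hcdef
  have hev : ∀ᶠ s in Filter.atTop, c / 2 < H.eval (g s) :=
    hHg.eventually (eventually_gt_nhds (by linarith))
  obtain ⟨s0, hs0⟩ := Filter.eventually_atTop.mp (hev.and (Filter.eventually_ge_atTop (1:ℝ)))
  have hs0one : (1:ℝ) ≤ s0 := (hs0 s0 le_rfl).2
  have hs0pos : (0:ℝ) < s0 := lt_of_lt_of_le one_pos hs0one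
  set c' := c / (2 * B ^ k) with hc'def
  have hBk : (0:ℝ) < B ^ k := pow_pos hBpos k
  have hc' : 0 < c' := by positivity
  -- derivative lower bound
  have hkey : ∀ s, s0 ≤ s → c' / s ≤ deriv g s := by
    intro s hs
    have hspos : 0 < s := lt_of_lt_of_le hs0pos hs
    have h1 : c / 2 ≤ H.eval (g s) := (hs0 s hs).1.le
    have hode' := hode s hspos
    have hgk : g s ^ k ≤ B ^ k := pow_le_pow_left₀ (hpos s hspos).le (hle s hspos) k
    have hD : 0 < deriv g s := hderiv s hspos
    rw [hc'def, div_div, div_le_iff₀ (by positivity)]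
    nlinarith [mul_le_mul_of_nonneg_right (mul_le_mul_of_nonneg_left hgk hspos.le) hD.le]
  -- the comparison function
  have hphi : MonotoneOn (fun t => g t - c' * Real.log t) (Set.Ici s0) := by
    apply monotoneOn_of_deriv_nonneg (convex_Ici s0)
    · apply ContinuousOn.sub
      · exact fun x hx => (hdiff x (lt_of_lt_of_le hs0pos hx)).continuousAt.continuousWithinAt
      · exact (continuousOn_const.mul (Real.continuousOn_log.mono (by
          intro x hx
          exact ne_of_gt (lt_of_lt_of_le hs0pos hx))))
    · intro x hx
      rw [interior_Ici] at hx
      have hxpos : 0 < x := hs0pos.trans hx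
      exact ((hdiff x hxpos).sub
        (((Real.hasDerivAt_log hxpos.ne').const_mul c').differentiableAt)).differentiableWithinAt
    · intro x hx
      rw [interior_Ici] at hx
      have hxpos : 0 < x := hs0pos.trans hx
      have hd : HasDerivAt (fun t => g t - c' * Real.log t) (deriv g x - c' * x⁻¹) x :=
        (hdiff x hxpos).hasDerivAt.sub ((Real.hasDerivAt_log hxpos.ne').const_mul c')
      rw [hd.deriv]
      have := hkey x hx.le
      rw [div_eq_mul_inv] at this
      linarith
  -- derive contradiction : g grows beyond B
  set t := max s0 (Real.exp ((B - g s0 + c' * Real.log s0 + 1) / c')) with htdef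
  have hts0 : s0 ≤ t := le_max_left _ _
  have htpos : 0 < t := lt_of_lt_of_le hs0pos hts0
  have hlogt : (B - g s0 + c' * Real.log s0 + 1) / c' ≤ Real.log t := by
    rw [← Real.log_exp ((B - g s0 + c' * Real.log s0 + 1) / c')]
    exact Real.log_le_log (Real.exp_pos _) (le_max_right _ _)
  have hmt := hphi Set.self_mem_Ici hts0 hts0
  simp only at hmt
  have h2 : B - g s0 + c' * Real.log s0 + 1 ≤ c' * Real.log t := by
    rw [div_le_iff₀ hc'] at hlogt
    linarith [hlogt]
  have h3 : g t ≤ B := hle t htpos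
  linarith
end

section
/- There is no differentiable function g : (0, +∞) → ℝ with g(s) > 0 and g'(s) > 0 for all s > 0 satisfying g'(s)/((g(s) + 1)·g(s)) = 1/s for all s > 0, such that g extends the profile of a smooth metric on ℂⁿ, i.e., with lim_{s→0⁺} g(s) = 0. -/
/-!
Separating variables in `s g' = g (g + 1)` shows that `g / (g + 1)` is a constant multiple `C s`
of `s`, with `C > 0` because `g > 0`. But `g / (g + 1) < 1`, so `C s < 1` for every `s > 0`,
which fails at `s = 1 / C`.
-/

open Set

noncomputable def riccatiFirstIntegral (g : ℝ → ℝ) (s : ℝ) : ℝ := g s / (g s + 1) / s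

lemma hasDerivAt_riccatiFirstIntegral {g : ℝ → ℝ} {s : ℝ} (hs : s ≠ 0) (hg : g s + 1 ≠ 0)
    (h : HasDerivAt g (g s * (g s + 1) / s) s) :
    HasDerivAt (riccatiFirstIntegral g) 0 s := by
  refine ((h.div (h.add_const 1) hg).div (hasDerivAt_id s) hs).congr_deriv ?_
  simp only [id, Pi.div_apply]
  field_simp
  ring

lemma riccatiFirstIntegral_eq_of_hasDerivAt {g : ℝ → ℝ} (hg : ∀ s, 0 < s → g s + 1 ≠ 0)
    (h : ∀ s, 0 < s → HasDerivAt g (g s * (g s + 1) / s) s) {s : ℝ} (hs : 0 < s) :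
    riccatiFirstIntegral g s = riccatiFirstIntegral g 1 := by
  have hderiv : ∀ x ∈ Ioi (0 : ℝ), HasDerivAt (riccatiFirstIntegral g) 0 x := fun x hx =>
    hasDerivAt_riccatiFirstIntegral (ne_of_gt hx) (hg x hx) (h x hx)
  exact isOpen_Ioi.is_const_of_deriv_eq_zero isPreconnected_Ioi
    (fun x hx => (hderiv x hx).differentiableAt.differentiableWithinAt)
    (fun x hx => (hderiv x hx).deriv) hs (mem_Ioi.2 one_pos)

lemma not_exists_pos_riccati_solution :
    ¬ ∃ g : ℝ → ℝ, (∀ s, 0 < s → 0 < g s) ∧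
      ∀ s, 0 < s → HasDerivAt g (g s * (g s + 1) / s) s := by
  rintro ⟨g, hpos, h⟩
  set C := riccatiFirstIntegral g 1
  have hC : 0 < C := by
    have := hpos 1 one_pos
    simp only [C, riccatiFirstIntegral, div_one]
    positivity
  have hs : 0 < 1 / C := by positivity
  have hg := hpos _ hs
  have hconst : g (1 / C) / (g (1 / C) + 1) / (1 / C) = C :=
    riccatiFirstIntegral_eq_of_hasDerivAt (fun s hs => by linarith [hpos s hs]) h hs
  rw [div_div_eq_mul_div, div_one, mul_eq_right₀ hC.ne', div_eq_one_iff_eq (by positivity)]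
    at hconst
  linarith

theorem stmt_11 :
    ¬ ∃ g : ℝ → ℝ,
      (∀ s, 0 < s → DifferentiableAt ℝ g s) ∧
      (∀ s, 0 < s → 0 < g s) ∧
      (∀ s, 0 < s → 0 < deriv g s) ∧
      (∀ s, 0 < s → deriv g s / ((g s + 1) * g s) = 1 / s) ∧
      Filter.Tendsto g (nhdsWithin 0 (Set.Ioi 0)) (nhds 0) := by
  rintro ⟨g, hdiff, hpos, -, hode, -⟩
  refine not_exists_pos_riccati_solution ⟨g, hpos, fun s hs => ?_⟩
  have hderiv : deriv g s = g s * (g s + 1) / s := by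
    have := hode s hs
    rw [div_eq_div_iff (by nlinarith [hpos s hs]) hs.ne', one_mul] at this
    rw [eq_div_iff hs.ne', this, mul_comm (g s)]
  exact hderiv ▸ (hdiff s hs).hasDerivAt
end

section
/- Let g : (0, +∞) → ℝ be differentiable with g(s) > 0, g'(s) > 0 for all s, and suppose s·g(s)·g'(s) = g(s)³ + g(s)² + λ·g(s) + μ for constants λ, μ ∈ ℝ with the right-hand side positive for all s. Then such g cannot exist; i.e., there is no positive strictly increasing differentiable solution on all of (0, +∞). -/
/-!
Substituting `s = exp x` turns the equation into the autonomous ODE `h h' = P(h)` on all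
of `ℝ`, with `h = g ∘ exp` strictly increasing and `P t = t³ + t² + λ t + μ`. A function
whose derivative has a nonzero limit at `±∞` cannot converge there. If `h → ∞`, this applies
to `-1/h`, whose derivative `P(h)/h³` tends to `1`. Otherwise `h` has finite limits
`0 ≤ m < L` at `-∞` and `+∞`, and applied to `h²`, whose derivative is `2 P(h)`, it gives
`P m = P L = 0`. Then `P t = (t - m)(t - L)(t + m + L + 1)` is negative on `(m, L)`,
contradicting `P(h 0) = h h' > 0`.
-/

open Filter Topology Set Real

theorem tendsto_atTop_of_tendsto_deriv_pos {f f' : ℝ → ℝ} {l : ℝ}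
    (hf : ∀ᶠ x in atTop, HasDerivAt f (f' x) x) (hf' : Tendsto f' atTop (𝓝 l)) (hl : 0 < l) :
    Tendsto f atTop atTop := by
  obtain ⟨a, ha⟩ :=
    eventually_atTop.1 (hf.and (hf'.eventually (eventually_ge_nhds (half_lt_self hl))))
  have hlin : ∀ x ∈ Ici a, f a + l / 2 * (x - a) ≤ f x := by
    intro x hx
    have hD : ∀ y ∈ Ici a, HasDerivAt f (f' y) y := fun y hy => (ha y hy).1
    have := (convex_Ici a).mul_sub_le_image_sub_of_le_deriv
      (fun y hy => (hD y hy).continuousAt.continuousWithinAt)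
      (fun y hy => (hD y (interior_subset hy)).differentiableAt.differentiableWithinAt)
      (fun y hy => (hD y (interior_subset hy)).deriv ▸ (ha y (interior_subset hy)).2)
      a self_mem_Ici x hx hx
    linarith
  refine tendsto_atTop_mono' _ (eventually_atTop.2 ⟨a, hlin⟩) ?_
  exact tendsto_atTop_add_const_left _ _
    ((tendsto_atTop_add_const_right _ (-a) tendsto_id).const_mul_atTop (half_pos hl))

theorem eq_zero_of_tendsto_of_tendsto_deriv_atTop {f f' : ℝ → ℝ} {a l : ℝ}
    (hf : ∀ᶠ x in atTop, HasDerivAt f (f' x) x) (hfa : Tendsto f atTop (𝓝 a))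
    (hf' : Tendsto f' atTop (𝓝 l)) : l = 0 := by
  rcases lt_trichotomy l 0 with hl | hl | hl
  · exact absurd (tendsto_atTop_of_tendsto_deriv_pos (hf.mono fun x hx => hx.neg) hf'.neg
      (neg_pos.2 hl)) (not_tendsto_atTop_of_tendsto_nhds hfa.neg)
  · exact hl
  · exact absurd (tendsto_atTop_of_tendsto_deriv_pos hf hf' hl)
      (not_tendsto_atTop_of_tendsto_nhds hfa)

theorem eq_zero_of_tendsto_of_tendsto_deriv_atBot {f f' : ℝ → ℝ} {a l : ℝ}
    (hf : ∀ᶠ x in atBot, HasDerivAt f (f' x) x) (hfa : Tendsto f atBot (𝓝 a))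
    (hf' : Tendsto f' atBot (𝓝 l)) : l = 0 := by
  have hneg : ∀ᶠ x in atTop, HasDerivAt (fun x => f (-x)) (-f' (-x)) x :=
    (tendsto_neg_atTop_atBot.eventually hf).mono fun x hx => by
      simpa [Function.comp_def] using hx.comp x (hasDerivAt_neg' x)
  simpa using eq_zero_of_tendsto_of_tendsto_deriv_atTop hneg
    (hfa.comp tendsto_neg_atTop_atBot) (hf'.comp tendsto_neg_atTop_atBot).neg

section AutonomousODE

variable {P h h' : ℝ → ℝ}

theorem hasDerivAt_mul_self_of_mul_deriv_eq (hh : ∀ x, HasDerivAt h (h' x) x)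
    (hode : ∀ x, h x * h' x = P (h x)) (x : ℝ) :
    HasDerivAt (fun x => h x * h x) (2 * P (h x)) x := by
  refine ((hh x).mul (hh x)).congr_deriv ?_
  rw [← hode]
  ring

theorem eq_zero_of_tendsto_atTop_of_mul_deriv_eq (hh : ∀ x, HasDerivAt h (h' x) x)
    (hode : ∀ x, h x * h' x = P (h x)) (hP : Continuous P) {L : ℝ}
    (hL : Tendsto h atTop (𝓝 L)) : P L = 0 := by
  have := eq_zero_of_tendsto_of_tendsto_deriv_atTop
    (Eventually.of_forall (hasDerivAt_mul_self_of_mul_deriv_eq hh hode)) (hL.mul hL)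
    (((hP.tendsto L).comp hL).const_mul 2)
  linarith

theorem eq_zero_of_tendsto_atBot_of_mul_deriv_eq (hh : ∀ x, HasDerivAt h (h' x) x)
    (hode : ∀ x, h x * h' x = P (h x)) (hP : Continuous P) {m : ℝ}
    (hm : Tendsto h atBot (𝓝 m)) : P m = 0 := by
  have := eq_zero_of_tendsto_of_tendsto_deriv_atBot
    (Eventually.of_forall (hasDerivAt_mul_self_of_mul_deriv_eq hh hode)) (hm.mul hm)
    (((hP.tendsto m).comp hm).const_mul 2)
  linarith

theorem eq_zero_of_tendsto_atTop_atTop_of_mul_deriv_eq (hh : ∀ x, HasDerivAt h (h' x) x)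
    (hode : ∀ x, h x * h' x = P (h x)) {l : ℝ}
    (hP : Tendsto (fun t => P t / t ^ 3) atTop (𝓝 l))
    (htop : Tendsto h atTop atTop) : l = 0 := by
  refine eq_zero_of_tendsto_of_tendsto_deriv_atTop (f := fun x => -(h x)⁻¹) ?_
    (by simpa using (tendsto_inv_atTop_zero.comp htop).neg) (hP.comp htop)
  filter_upwards [htop.eventually_gt_atTop 0] with x hx
  refine ((hh x).inv hx.ne').neg.congr_deriv ?_
  rw [Function.comp_apply, ← hode]
  field_simp

end AutonomousODE

theorem tendsto_cubic_div_cube (lam mu : ℝ) :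
    Tendsto (fun t => (t ^ 3 + t ^ 2 + lam * t + mu) / t ^ 3) atTop (𝓝 1) := by
  have hcont : Tendsto (fun u : ℝ => 1 + u + lam * u ^ 2 + mu * u ^ 3) (𝓝 0) (𝓝 1) := by
    simpa using (by fun_prop : Continuous fun u : ℝ => 1 + u + lam * u ^ 2 + mu * u ^ 3).tendsto 0
  refine (hcont.comp tendsto_inv_atTop_zero).congr' ?_
  filter_upwards [eventually_gt_atTop 0] with t ht
  simp only [Function.comp_apply]
  field_simp

theorem cubic_neg_between_roots {lam mu m L t : ℝ} (hm : 0 ≤ m) (hmt : m < t) (htL : t < L)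
    (hPm : m ^ 3 + m ^ 2 + lam * m + mu = 0) (hPL : L ^ 3 + L ^ 2 + lam * L + mu = 0) :
    t ^ 3 + t ^ 2 + lam * t + mu < 0 := by
  have hfactor : (L - m) * (t ^ 3 + t ^ 2 + lam * t + mu)
      = (L - m) * ((t - m) * (t - L) * (t + m + L + 1)) := by
    linear_combination (L - t) * hPm + (t - m) * hPL
  have hneg : (t - m) * (t - L) * (t + m + L + 1) < 0 :=
    mul_neg_of_neg_of_pos (mul_neg_of_pos_of_neg (by linarith) (by linarith)) (by linarith)
  exact (mul_left_cancel₀ (by linarith : L - m ≠ 0) hfactor).trans_lt hneg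

theorem stmt_12 (lam mu : ℝ) :
    ¬ ∃ g : ℝ → ℝ,
      (∀ s, 0 < s → DifferentiableAt ℝ g s) ∧
      (∀ s, 0 < s → 0 < g s) ∧
      (∀ s, 0 < s → 0 < deriv g s) ∧
      (∀ s, 0 < s → 0 < (g s)^3 + (g s)^2 + lam * g s + mu) ∧
      (∀ s, 0 < s → s * g s * deriv g s = (g s)^3 + (g s)^2 + lam * g s + mu) := by
  rintro ⟨g, hdiff, hpos, hder, -, hode⟩
  set P : ℝ → ℝ := fun t => t ^ 3 + t ^ 2 + lam * t + mu
  set h : ℝ → ℝ := fun x => g (exp x)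
  set h' : ℝ → ℝ := fun x => deriv g (exp x) * exp x
  have hh (x : ℝ) : HasDerivAt h (h' x) x :=
    (hdiff _ (exp_pos x)).hasDerivAt.comp x (hasDerivAt_exp x)
  have hh' (x : ℝ) : 0 < h' x := mul_pos (hder _ (exp_pos x)) (exp_pos x)
  have hodeh (x : ℝ) : h x * h' x = P (h x) := by
    simp only [h, h', P]
    linear_combination hode _ (exp_pos x)
  have hmono : StrictMono h := strictMono_of_deriv_pos fun x => (hh x).deriv ▸ hh' x
  have hh0 (x : ℝ) : 0 < h x := hpos _ (exp_pos x)
  obtain ⟨m, hm⟩ : ∃ m, Tendsto h atBot (𝓝 m) :=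
    ⟨_, tendsto_atBot_ciInf hmono.monotone ⟨0, by rintro _ ⟨x, rfl⟩; exact (hh0 x).le⟩⟩
  rcases tendsto_atTop_of_monotone hmono.monotone with htop | ⟨L, hL⟩
  · exact one_ne_zero (eq_zero_of_tendsto_atTop_atTop_of_mul_deriv_eq hh hodeh
      (tendsto_cubic_div_cube lam mu) htop)
  have hP : Continuous P := by fun_prop
  have hneg : P (h 0) < 0 := cubic_neg_between_roots
    (ge_of_tendsto' hm fun x => (hh0 x).le)
    ((hmono.monotone.le_of_tendsto hm (-1)).trans_lt (hmono (by norm_num)))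
    ((hmono (by norm_num : (0 : ℝ) < 1)).trans_le (hmono.monotone.ge_of_tendsto hL 1))
    (eq_zero_of_tendsto_atBot_of_mul_deriv_eq hh hodeh hP hm)
    (eq_zero_of_tendsto_atTop_of_mul_deriv_eq hh hodeh hP hL)
  have hpos0 : 0 < P (h 0) := hodeh 0 ▸ mul_pos (hh0 0) (hh' 0)
  linarith
end

section
/- Let g : (0, +∞) → ℝ be differentiable with g(s) > 0, g'(s) > 0 for all s, and suppose s·g(s)²·g'(s) = g(s)⁴ + g(s)³ + λ·g(s) + μ for constants λ, μ ∈ ℝ with the right-hand side positive for all s. Then such g cannot exist. -/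
/-!
Along a solution `g` is strictly increasing, so its range `S` is an interval in `(0, ∞)` on which
`P(y) = y⁴ + y³ + λy + μ` is positive. Since `P` is convex on `[0, ∞)` it cannot be `≤ 0` at both
ends of `S`; by compactness, either `P ≥ c > 0` on the lower part of `S`, or `P(y) ≥ c y⁴` on its
upper part (automatically so if `S` is unbounded, as `P` is quartic). In the first case the ODE
reads `s (g³/3)' ≥ c` for small `s`, so `g³/3` drops by at least `c log (b/a)` on `[a, b]` and
turns negative as `a → 0`. In the second case `s (-1/g)' ≥ c` for large `s`, so `-1/g` rises by at
least `c log (b/a)` and becomes positive as `b → ∞`.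
-/

open Set Filter Real

theorem IsPreconnected.Ioc_csInf_subset {α : Type*} [ConditionallyCompleteLinearOrder α]
    [TopologicalSpace α] [OrderTopology α] {s : Set α} (hs : IsPreconnected s) (hb : BddBelow s)
    {x : α} (hx : x ∈ s) : Ioc (sInf s) x ⊆ s := fun _ hy =>
  let ⟨_, hzs, hzy⟩ := (isGLB_lt_iff (isGLB_csInf ⟨x, hx⟩ hb)).1 hy.1
  hs.Icc_subset hzs hx ⟨hzy.le, hy.2⟩

theorem IsPreconnected.Ico_csSup_subset {α : Type*} [ConditionallyCompleteLinearOrder α]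
    [TopologicalSpace α] [OrderTopology α] {s : Set α} (hs : IsPreconnected s) (hb : BddAbove s)
    {x : α} (hx : x ∈ s) : Ico x (sSup s) ⊆ s := fun _ hy =>
  let ⟨_, hzs, hyz⟩ := (lt_isLUB_iff (isLUB_csSup ⟨x, hx⟩ hb)).1 hy.2
  hs.Icc_subset hx hzs ⟨hy.1, hyz.le⟩

theorem IsCompact.exists_pos_forall_le {X : Type*} [TopologicalSpace X] {K : Set X} {f : X → ℝ}
    (hK : IsCompact K) (hf : ContinuousOn f K) (hpos : ∀ x ∈ K, 0 < f x) :
    ∃ c > 0, ∀ x ∈ K, c ≤ f x := by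
  rcases K.eq_empty_or_nonempty with rfl | hne
  · exact ⟨1, one_pos, by simp⟩
  · obtain ⟨y, hy, hmin⟩ := hK.exists_isMinOn hne hf
    exact ⟨f y, hpos y hy, hmin⟩

theorem mul_log_div_le_sub_of_le_mul_deriv {f f' : ℝ → ℝ} {k a b : ℝ} (ha : 0 < a) (hab : a ≤ b)
    (hf : ∀ x ∈ Icc a b, HasDerivAt f (f' x) x) (hk : ∀ x ∈ Ioo a b, k ≤ x * f' x) :
    k * log (b / a) ≤ f b - f a := by
  have hF : ∀ x ∈ Icc a b, HasDerivAt (fun x => f x - k * log x) (f' x - k * x⁻¹) x :=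
    fun x hx => (hf x hx).sub ((hasDerivAt_log (ha.trans_le hx.1).ne').const_mul k)
  have hmono : MonotoneOn (fun x => f x - k * log x) (Icc a b) := by
    refine monotoneOn_of_hasDerivWithinAt_nonneg (f' := fun x => f' x - k * x⁻¹) (convex_Icc a b)
      (fun x hx => (hF x hx).continuousAt.continuousWithinAt) (fun x hx => ?_) (fun x hx => ?_)
    · exact (hF x (interior_subset hx)).hasDerivWithinAt
    · rw [interior_Icc] at hx
      have hx0 : 0 < x := ha.trans hx.1
      rw [sub_nonneg, ← div_eq_mul_inv, div_le_iff₀ hx0, mul_comm]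
      exact hk x hx
  have := hmono (left_mem_Icc.2 hab) (right_mem_Icc.2 hab) hab
  rw [log_div (ha.trans_le hab).ne' ha.ne']
  linarith

theorem not_forall_Ioc_const_le_mul_sq_mul_deriv {g : ℝ → ℝ} {c b : ℝ} (hc : 0 < c) (hb : 0 < b)
    (hdiff : ∀ s, 0 < s → DifferentiableAt ℝ g s) (hpos : ∀ s, 0 < s → 0 < g s) :
    ¬ ∀ s ∈ Ioc 0 b, c ≤ s * g s ^ 2 * deriv g s := by
  intro hle
  have hgb := hpos b hb
  set T := g b ^ 3 / (3 * c)
  set a := b * exp (-T)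
  have ha : 0 < a := by positivity
  have hab : a ≤ b := mul_le_of_le_one_right hb.le (exp_le_one_iff.2 (neg_nonpos.2 (by positivity)))
  have hlog : log (b / a) = T := by
    rw [div_mul_cancel_left₀ hb.ne', ← exp_neg, neg_neg, log_exp]
  have key := mul_log_div_le_sub_of_le_mul_deriv (f := fun s => g s ^ 3 / 3)
    (f' := fun s => g s ^ 2 * deriv g s) ha hab
    (fun x hx => (((hdiff x (ha.trans_le hx.1)).hasDerivAt.pow 3).div_const 3).congr_deriv
      (by ring))
    (fun x hx => by rw [← mul_assoc]; exact hle x ⟨ha.trans hx.1, hx.2.le⟩)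
  rw [hlog] at key
  have hga := pow_pos (hpos a ha) 3
  have hcT : c * T = g b ^ 3 / 3 := by simp only [T]; field_simp
  linarith

theorem not_forall_Ici_mul_pow_four_le_mul_sq_mul_deriv {g : ℝ → ℝ} {c a : ℝ} (hc : 0 < c)
    (ha : 0 < a) (hdiff : ∀ s, 0 < s → DifferentiableAt ℝ g s) (hpos : ∀ s, 0 < s → 0 < g s) :
    ¬ ∀ s ∈ Ici a, c * g s ^ 4 ≤ s * g s ^ 2 * deriv g s := by
  intro hle
  have hga := hpos a ha
  set T := (g a)⁻¹ / c
  set b := a * exp T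
  have hab : a ≤ b := le_mul_of_one_le_right ha.le (one_le_exp (by positivity))
  have hlog : log (b / a) = T := by rw [mul_div_cancel_left₀ _ ha.ne', log_exp]
  have key := mul_log_div_le_sub_of_le_mul_deriv (k := c) (f := fun s => -(g s)⁻¹)
    (f' := fun s => deriv g s / g s ^ 2) ha hab
    (fun x hx => ((hdiff x (ha.trans_le hx.1)).hasDerivAt.inv
      (hpos x (ha.trans_le hx.1)).ne').neg.congr_deriv (by ring))
    (fun x hx => by
      have hg := hpos x (ha.trans hx.1)
      have := hle x hx.1.le
      rw [mul_div_assoc', le_div_iff₀ (by positivity)]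
      exact le_of_mul_le_mul_right (by linarith) (by positivity : (0:ℝ) < g x ^ 2))
  rw [hlog] at key
  have hgb := inv_pos.2 (hpos b (ha.trans_le hab))
  have hcT : c * T = (g a)⁻¹ := by simp only [T]; field_simp
  linarith

theorem exists_pos_le_below_or_mul_pow_four_le_above {P : ℝ → ℝ} (hPc : Continuous P)
    (hPconv : ConvexOn ℝ (Ici 0) P) (hPtop : ∀ᶠ y in atTop, y ^ 4 ≤ P y) {S : Set ℝ}
    (hS : IsPreconnected S) (hS0 : S ⊆ Ioi 0) (hPS : ∀ y ∈ S, 0 < P y) {x : ℝ} (hx : x ∈ S) :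
    (∃ c > 0, ∀ y ∈ S, y ≤ x → c ≤ P y) ∨
      ∃ c > 0, ∃ y₀ ∈ S, ∀ y ∈ S, y₀ ≤ y → c * y ^ 4 ≤ P y := by
  have hbdd : BddBelow S := ⟨0, fun y hy => (hS0 hy).le⟩
  by_cases hL : 0 < P (sInf S)
  · obtain ⟨c, hc, hcP⟩ := isCompact_Icc.exists_pos_forall_le hPc.continuousOn
      fun y (hy : y ∈ Icc (sInf S) x) => hy.1.eq_or_lt.elim (fun h => h ▸ hL)
        fun h => hPS y (hS.Ioc_csInf_subset hbdd hx ⟨h, hy.2⟩)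
    exact Or.inl ⟨c, hc, fun y hy hyx => hcP y ⟨csInf_le hbdd hy, hyx⟩⟩
  refine Or.inr ?_
  by_cases hB : BddAbove S
  · have hM : 0 < P (sSup S) := by
      by_contra! hM
      have hxI : x ∈ segment ℝ (sInf S) (sSup S) := by
        rw [segment_eq_Icc ((csInf_le hbdd hx).trans (le_csSup hB hx))]
        exact ⟨csInf_le hbdd hx, le_csSup hB hx⟩
      have := hPconv.le_on_segment (le_csInf ⟨x, hx⟩ fun y hy => (hS0 hy).le)
        ((hS0 hx).le.trans (le_csSup hB hx)) hxI
      linarith [hPS x hx, max_le (not_lt.1 hL) hM]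
    obtain ⟨c, hc, hcP⟩ := isCompact_Icc.exists_pos_forall_le hPc.continuousOn
      fun y (hy : y ∈ Icc x (sSup S)) => hy.2.eq_or_lt.elim (fun h => h.symm ▸ hM)
        fun h => hPS y (hS.Ico_csSup_subset hB hx ⟨hy.1, h⟩)
    have hM0 : 0 < sSup S := (hS0 hx).trans_le (le_csSup hB hx)
    refine ⟨c / sSup S ^ 4, by positivity, x, hx, fun y hy hxy => ?_⟩
    calc c / sSup S ^ 4 * y ^ 4 ≤ c := by
          rw [div_mul_eq_mul_div, div_le_iff₀ (by positivity)]
          gcongr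
          exacts [(hS0 hy).le, le_csSup hB hy]
      _ ≤ P y := hcP y ⟨hxy, le_csSup hB hy⟩
  · obtain ⟨X, hX⟩ := eventually_atTop.1 hPtop
    obtain ⟨y₀, hy₀, hXy₀⟩ := not_bddAbove_iff.1 hB X
    exact ⟨1, one_pos, y₀, hy₀, fun y _ hy => by simpa using hX y (hXy₀.le.trans hy)⟩

theorem convexOn_quartic (lam mu : ℝ) :
    ConvexOn ℝ (Ici 0) fun y : ℝ => y ^ 4 + y ^ 3 + lam * y + mu :=
  (((convexOn_pow 4).add (convexOn_pow 3)).add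
    ((LinearMap.mulLeft ℝ lam).convexOn (convex_Ici 0))).add_const mu

theorem eventually_pow_four_le_quartic (lam mu : ℝ) :
    ∀ᶠ y in atTop, y ^ 4 ≤ y ^ 4 + y ^ 3 + lam * y + mu := by
  filter_upwards [eventually_ge_atTop (1 + |lam| + |mu|)] with y hy
  have hy1 : 1 ≤ y := by linarith [abs_nonneg lam, abs_nonneg mu]
  have : (|lam| + |mu|) * y ≤ y ^ 3 := by
    nlinarith [mul_le_mul_of_nonneg_right (by linarith : |lam| + |mu| ≤ y) (by linarith : 0 ≤ y),
      mul_le_mul_of_nonneg_left hy1 (sq_nonneg y)]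
  nlinarith [neg_abs_le lam, neg_abs_le mu, abs_nonneg mu]

theorem stmt_13 (lam mu : ℝ) :
    ¬ ∃ g : ℝ → ℝ,
      (∀ s, 0 < s → DifferentiableAt ℝ g s) ∧
      (∀ s, 0 < s → 0 < g s) ∧
      (∀ s, 0 < s → 0 < deriv g s) ∧
      (∀ s, 0 < s → 0 < (g s)^4 + (g s)^3 + lam * g s + mu) ∧
      (∀ s, 0 < s → s * (g s)^2 * deriv g s = (g s)^4 + (g s)^3 + lam * g s + mu) := by
  rintro ⟨g, hdiff, hpos, hder, hP, hode⟩
  have hcont : ContinuousOn g (Ioi 0) := fun s hs => (hdiff s hs).continuousAt.continuousWithinAt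
  have hmono : MonotoneOn g (Ioi 0) :=
    (strictMonoOn_of_deriv_pos (convex_Ioi 0) hcont (by simpa using hder)).monotoneOn
  have h1 : (1 : ℝ) ∈ Ioi 0 := mem_Ioi.2 one_pos
  rcases exists_pos_le_below_or_mul_pow_four_le_above (by fun_prop) (convexOn_quartic lam mu)
      (eventually_pow_four_le_quartic lam mu) (isPreconnected_Ioi.image g hcont)
      (image_subset_iff.2 hpos) (forall_mem_image.2 hP) (mem_image_of_mem g h1) with
    ⟨c, hc, hbelow⟩ | ⟨c, hc, _, ⟨s₀, hs₀, rfl⟩, habove⟩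
  · refine not_forall_Ioc_const_le_mul_sq_mul_deriv hc h1 hdiff hpos fun s hs => ?_
    rw [hode s hs.1]
    exact hbelow _ (mem_image_of_mem g hs.1) (hmono hs.1 h1 hs.2)
  · refine not_forall_Ici_mul_pow_four_le_mul_sq_mul_deriv hc hs₀ hdiff hpos fun s hs₀s => ?_
    have hs : 0 < s := hs₀.trans_le hs₀s
    rw [hode s hs]
    exact habove _ (mem_image_of_mem g hs) (hmono hs₀ hs hs₀s)
end

section
/- Let α < β be real numbers with α·β ≠ 0 and α + β = 1, and let k = β - α, so 0 < k < 1 requires α > 0. Suppose g : (0, +∞) → (α, β) is differentiable, strictly increasing, and satisfies g'(s)/(g(s) - α) - g'(s)/(g(s) - β) = (β - α)/s for all s > 0, with lim_{s→0⁺} g(s) = α and lim_{s→+∞} g(s) = β. Then there exists a constant a > 0 such that g(s) = (1/2)(k + 1) - k·a/(s^k + a) for all s > 0. -/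
/-!
Along a solution the ODE says that `log (g - α) - log (β - g)` and `k log s` (with `k = β - α`)
have the same derivative on `(0, ∞)`, so they differ by a constant `c`. Exponentiating gives
`s ^ k * (β - g s) = a * (g s - α)` with `a = exp (-c) > 0`, and solving this linear equation
for `g s` gives the closed form, since `(k + 1) / 2 = β` when `α + β = 1`.
-/

open Real Set

lemma hasDerivAt_log_sub_sub_log_sub {g : ℝ → ℝ} {g' α β s : ℝ} (hg : HasDerivAt g g' s)
    (hα : α < g s) (hβ : g s < β) :
    HasDerivAt (fun t => log (g t - α) - log (β - g t))
      (g' / (g s - α) - g' / (g s - β)) s := by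
  have hlog_sub := (hg.sub_const α).log (sub_pos.2 hα).ne'
  have hlog_sub' := (hg.const_sub β).log (sub_pos.2 hβ).ne'
  refine (hlog_sub.sub hlog_sub').congr_deriv ?_
  rw [show g s - β = -(β - g s) by ring, div_neg, neg_div]

lemma exists_log_sub_sub_log_sub_eq {α β k : ℝ} {g : ℝ → ℝ}
    (hdiff : ∀ s, 0 < s → DifferentiableAt ℝ g s)
    (hrange : ∀ s, 0 < s → g s ∈ Ioo α β)
    (hode : ∀ s, 0 < s → deriv g s / (g s - α) - deriv g s / (g s - β) = k / s) :
    ∃ c, ∀ s, 0 < s → log (g s - α) - log (β - g s) = k * log s + c := by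
  have hlogit : ∀ s ∈ Ioi (0 : ℝ), HasDerivAt (fun t => log (g t - α) - log (β - g t)) (k / s) s :=
    fun s hs => hode s hs ▸
      hasDerivAt_log_sub_sub_log_sub (hdiff s hs).hasDerivAt (hrange s hs).1 (hrange s hs).2
  have hklog : ∀ s ∈ Ioi (0 : ℝ), HasDerivAt (fun t => k * log t) (k / s) s :=
    fun s hs => by simpa [div_eq_mul_inv] using (hasDerivAt_log (ne_of_gt hs)).const_mul k
  obtain ⟨c, hc⟩ := isOpen_Ioi.exists_eq_add_of_deriv_eq isPreconnected_Ioi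
    (fun s hs => (hlogit s hs).differentiableAt.differentiableWithinAt)
    (fun s hs => (hklog s hs).differentiableAt.differentiableWithinAt)
    (fun s hs => (hlogit s hs).deriv.trans (hklog s hs).deriv.symm)
  exact ⟨c, fun s hs => hc hs⟩

lemma eq_sub_mul_div_add_of_mul_sub_eq {x α β p a : ℝ} (hpa : p + a ≠ 0)
    (h : p * (β - x) = a * (x - α)) : x = β - (β - α) * a / (p + a) := by
  field_simp
  linear_combination -h

theorem stmt_15_general (α β : ℝ)
    (hsum : α + β = 1) (g : ℝ → ℝ)
    (hdiff : ∀ s, 0 < s → DifferentiableAt ℝ g s)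
    (hrange : ∀ s, 0 < s → g s ∈ Set.Ioo α β)
    (hode : ∀ s, 0 < s →
      deriv g s / (g s - α) - deriv g s / (g s - β) = (β - α) / s) :
    ∃ a : ℝ, 0 < a ∧ ∀ s, 0 < s →
      g s = (1/2) * ((β - α) + 1) - (β - α) * a / (s ^ (β - α) + a) := by
  obtain ⟨c, hc⟩ := exists_log_sub_sub_log_sub_eq hdiff hrange hode
  refine ⟨exp (-c), exp_pos _, fun s hs => ?_⟩
  obtain ⟨hα, hβ⟩ := hrange s hs
  have hpow : s ^ (β - α) = exp ((β - α) * log s) := by rw [rpow_def_of_pos hs, mul_comm]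
  have hsol : s ^ (β - α) * (β - g s) = exp (-c) * (g s - α) := by
    rw [← exp_log (sub_pos.2 hα), ← exp_log (sub_pos.2 hβ), hpow, ← exp_add, ← exp_add]
    congr 1
    linarith [hc s hs]
  rw [show (1/2) * ((β - α) + 1) = β by linarith]
  exact eq_sub_mul_div_add_of_mul_sub_eq (by positivity) hsol

theorem stmt_15 (α β : ℝ) (hαβ : α < β) (hne : α * β ≠ 0)
    (hsum : α + β = 1) (hα : 0 < α) (g : ℝ → ℝ)
    (hdiff : ∀ s, 0 < s → DifferentiableAt ℝ g s)
    (hrange : ∀ s, 0 < s → g s ∈ Set.Ioo α β)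
    (hmono : StrictMonoOn g (Set.Ioi 0))
    (hode : ∀ s, 0 < s →
      deriv g s / (g s - α) - deriv g s / (g s - β) = (β - α) / s)
    (hlim0 : Filter.Tendsto g (nhdsWithin 0 (Set.Ioi 0)) (nhds α))
    (hlimtop : Filter.Tendsto g Filter.atTop (nhds β)) :
    ∃ a : ℝ, 0 < a ∧ ∀ s, 0 < s →
      g s = (1/2) * ((β - α) + 1) - (β - α) * a / (s ^ (β - α) + a) :=
  stmt_15_general α β hsum g hdiff hrange hode
end
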